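/- arXiv:1102.2120 — 7 statements merged into one kernel-verified Lean document; each statement's English description precedes it below -/
import Mathlib

section
/- Let f : ℝ → ℝ be differentiable, let τ > 0 and α > β > 0 be constants, and suppose f'(t) ≤ -α f(t) + β · sup_{s ∈ [t-τ, t]} f(s) for all t ≥ t₀. Then there exist γ > 0 and K > 0 such that f(t) ≤ K · exp(-γ (t - t₀)) for all t ≥ t₀. -/
/-!
Pick `γ > 0` with `β e^{γτ} + γ < α` and `K > 0` strictly above `f` on the initial interval
`[t₀ - τ, t₀]`, and compare `f` with `g t = K e^{-γ (t - t₀)}`. If `f` ever reached `g`, then at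
the first time `t₁` it does, `f ≤ g` on the whole delay window `[t₁ - τ, t₁]`, whose maximum of `g`
is at most `e^{γτ} g t₁`; the differential inequality then forces `(f - g)'(t₁) < 0`, although
`f - g` climbs to `0` from below at `t₁`.
-/

open Real Set Filter Topology

theorem exists_pos_mul_exp_add_lt {α β : ℝ} (hαβ : β < α) (τ : ℝ) :
    ∃ γ > (0 : ℝ), β * exp (γ * τ) + γ < α := by
  have hcont : ContinuousAt (fun γ : ℝ => β * exp (γ * τ) + γ) 0 := by fun_prop
  have hnear : ∀ᶠ γ in 𝓝 (0 : ℝ), β * exp (γ * τ) + γ < α :=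
    hcont.eventually_lt continuousAt_const (by simpa using hαβ)
  have hright : ∀ᶠ γ in 𝓝[>] (0 : ℝ), β * exp (γ * τ) + γ < α := mem_nhdsWithin_of_mem_nhds hnear
  exact (hright.and self_mem_nhdsWithin).exists.imp fun _ h => ⟨h.2, h.1⟩

theorem exists_first_zero_of_neg_of_nonneg {φ : ℝ → ℝ} {a b : ℝ} (hab : a ≤ b)
    (hφ : ContinuousOn φ (Icc a b)) (ha : φ a < 0) (hb : 0 ≤ φ b) :
    ∃ c ∈ Ioc a b, φ c = 0 ∧ ∀ s ∈ Ico a c, φ s < 0 := by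
  set S := Icc a b ∩ φ ⁻¹' Ici 0
  have hS : IsClosed S := hφ.preimage_isClosed_of_isClosed isClosed_Icc isClosed_Ici
  have hbS : b ∈ S := ⟨⟨hab, le_rfl⟩, hb⟩
  have hSbdd : BddBelow S := ⟨a, fun s hs => hs.1.1⟩
  have hcS : sInf S ∈ S := hS.csInf_mem ⟨b, hbS⟩ hSbdd
  have hbefore : ∀ s ∈ Ico a (sInf S), φ s < 0 := fun s hs => by
    by_contra! h
    exact (csInf_le hSbdd ⟨⟨hs.1, hs.2.le.trans hcS.1.2⟩, h⟩).not_gt hs.2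
  have hac : a < sInf S := hcS.1.1.lt_of_ne fun h => (h ▸ hcS.2 : 0 ≤ φ a).not_gt ha
  refine ⟨sInf S, ⟨hac, hcS.1.2⟩, ?_, hbefore⟩
  obtain ⟨s, hs, hs0⟩ : ∃ s ∈ Icc a (sInf S), φ s = 0 :=
    intermediate_value_Icc hac.le (hφ.mono (Icc_subset_Icc_right hcS.1.2)) ⟨ha.le, hcS.2⟩
  obtain rfl : s = sInf S := by
    by_contra hne
    exact (hbefore s ⟨hs.1, lt_of_le_of_ne hs.2 hne⟩).ne hs0
  exact hs0

theorem IsLocalMaxOn.hasDerivWithinAt_Iic_nonneg {φ : ℝ → ℝ} {a d : ℝ}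
    (h : IsLocalMaxOn φ (Iic a) a) (hd : HasDerivWithinAt φ d (Iic a) a) : 0 ≤ d := by
  have hcone : (-1 : ℝ) ∈ posTangentConeAt (Iic a) a :=
    mem_posTangentConeAt_of_segment_subset <| by
      rw [segment_eq_uIcc, uIcc_of_ge (by linarith)]
      exact Icc_subset_Iic_self
  simpa using h.hasFDerivWithinAt_nonpos hd.hasFDerivWithinAt hcone

theorem halanay_lt_mul_exp {f : ℝ → ℝ} {t₀ τ α β γ K : ℝ} (hfc : Continuous f)
    (hfd : ∀ t, t₀ ≤ t → DifferentiableAt ℝ f t) (hτ : 0 ≤ τ) (hβ : 0 ≤ β) (hγ : 0 ≤ γ)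
    (hK : 0 < K) (hγα : β * exp (γ * τ) + γ < α)
    (hineq : ∀ t, t₀ ≤ t → deriv f t ≤ -α * f t + β * sSup (f '' Icc (t - τ) t))
    (hinit : ∀ s ∈ Icc (t₀ - τ) t₀, f s < K) :
    ∀ t, t₀ ≤ t → f t < K * exp (-γ * (t - t₀)) := by
  set g : ℝ → ℝ := fun t => K * exp (-γ * (t - t₀)) with hg
  have hg' : ∀ t, HasDerivAt g (-γ * g t) t := fun t =>
    ((((hasDerivAt_id t).sub_const t₀).const_mul (-γ)).exp.const_mul K).congr_deriv
      (by simp only [hg, id]; ring)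
  intro t ht
  by_contra! hcross
  obtain ⟨t₁, ⟨ht₀₁, -⟩, hzero, hbefore⟩ :=
    exists_first_zero_of_neg_of_nonneg (φ := fun s => f s - g s) ht
      (hfc.sub (by fun_prop)).continuousOn
      (by simpa [hg] using hinit t₀ ⟨by linarith, le_rfl⟩) (by linarith)
  have hfg : ∀ s ∈ Icc (t₀ - τ) t₁, f s ≤ g s := by
    rintro s ⟨hs₁, hs₂⟩
    rcases le_or_gt s t₀ with hs | hs
    · have : 1 ≤ exp (-γ * (s - t₀)) := one_le_exp (by nlinarith)
      have := hinit s ⟨hs₁, hs⟩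
      simp only [hg]
      nlinarith
    · rcases hs₂.lt_or_eq with hs₂ | rfl
      · exact (sub_neg.1 (hbefore s ⟨hs.le, hs₂⟩)).le
      · exact (sub_eq_zero.1 hzero).le
  have hwindow : sSup (f '' Icc (t₁ - τ) t₁) ≤ exp (γ * τ) * g t₁ := by
    refine csSup_le ((nonempty_Icc.2 (by linarith)).image f) ?_
    rintro _ ⟨s, hs, rfl⟩
    have hexp : exp (-γ * (s - t₀)) ≤ exp (γ * τ) * exp (-γ * (t₁ - t₀)) := by
      rw [← exp_add]
      exact exp_le_exp.2 (by nlinarith [hs.1])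
    calc f s ≤ g s := hfg s ⟨by linarith [hs.1], hs.2⟩
      _ ≤ exp (γ * τ) * g t₁ := by simp only [hg]; nlinarith
  have hmax : IsLocalMaxOn (fun s => f s - g s) (Iic t₁) t₁ :=
    Filter.mem_of_superset (Icc_mem_nhdsLE ht₀₁) fun s hs => by
      rcases hs.2.lt_or_eq with hs₂ | rfl
      · exact (hbefore s ⟨hs.1, hs₂⟩).le.trans hzero.ge
      · exact le_refl (f s - g s)
  have hslope : 0 ≤ deriv f t₁ - -γ * g t₁ :=
    hmax.hasDerivWithinAt_Iic_nonneg ((hfd t₁ ht₀₁.le).hasDerivAt.sub (hg' t₁)).hasDerivWithinAt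
  have hgpos : 0 < g t₁ := mul_pos hK (exp_pos _)
  have hderiv := hineq t₁ ht₀₁.le
  rw [sub_eq_zero.1 hzero] at hderiv
  nlinarith [mul_lt_mul_of_pos_right hγα hgpos, mul_le_mul_of_nonneg_left hwindow hβ]

/-- Classical Halanay inequality (Halanay, 1966). -/
theorem halanay_inequality (f : ℝ → ℝ) (t₀ τ α β : ℝ)
    (hf : Differentiable ℝ f) (hτ : 0 < τ) (hβ : 0 < β) (hαβ : β < α)
    (hineq : ∀ t, t₀ ≤ t →
      deriv f t ≤ -α * f t + β * sSup (f '' Set.Icc (t - τ) t)) :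
    ∃ γ > (0:ℝ), ∃ K > (0:ℝ), ∀ t, t₀ ≤ t →
      f t ≤ K * Real.exp (-γ * (t - t₀)) := by
  obtain ⟨γ, hγ, hγα⟩ := exists_pos_mul_exp_add_lt hαβ τ
  obtain ⟨M, hM⟩ : BddAbove (f '' Icc (t₀ - τ) t₀) :=
    (isCompact_Icc.image hf.continuous).bddAbove
  have hinit : ∀ s ∈ Icc (t₀ - τ) t₀, f s < max M 0 + 1 := fun s hs => by
    linarith [hM (mem_image_of_mem f hs), le_max_left M 0]
  exact ⟨γ, hγ, max M 0 + 1, by positivity, fun t ht =>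
    (halanay_lt_mul_exp hf.continuous (fun t _ => hf t) hτ.le hβ.le hγ.le (by positivity) hγα
      hineq hinit t ht).le⟩
end

section
/- Let x : ℝ → ℝ be nonnegative and differentiable on [t₀, ∞), let τ : ℝ → ℝ be nonnegative, continuous and bounded with τ* = sup_t τ(t), and let a, b : ℝ → ℝ be nonnegative, continuous, bounded functions with inf_{t ∈ ℝ} (a(t) - b(t)) = L > 0. If x'(t) ≤ -a(t) x(t) + b(t) · sup_{s ∈ [t - τ(t), t]} x(s) for all t ≥ t₀, then there exists λ > 0 such that x(t) ≤ (sup_{s ∈ [t₀ - τ*, t₀]} x(s)) · exp(-λ (t - t₀)) for all t > t₀. -/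
/-!
Compare `x` with the envelope `y t = C e^{-λ (t - t₀)}`, where `C` exceeds the initial supremum
and the rate `λ > 0` is so small that `b(t) e^{λ τ*} < a(t) - λ` for all `t` (possible because
`a - b ≥ L > 0` and `b` is bounded). If `x` ever exceeded `y`, then at the first time `t₁` where
`x` catches up with `y` the history of `x` on `[t₁ - τ*, t₁]` lies below `y`, hence below
`y(t₁) e^{λ τ*}`, and the delay inequality gives `x'(t₁) < -λ y(t₁) = y'(t₁)`; but `x - y` rises
to `0` at `t₁`, so `x'(t₁) ≥ y'(t₁)`. Letting `C` decrease to the initial supremum gives the bound.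
-/

open Set Filter Topology Real

lemma exists_mem_Ioo_eq_zero_forall_Ico_neg {f : ℝ → ℝ} {a b : ℝ} (hab : a ≤ b)
    (hf : ContinuousOn f (Icc a b)) (ha : f a < 0) (hb : 0 < f b) :
    ∃ c ∈ Ioo a b, f c = 0 ∧ ∀ s ∈ Ico a c, f s < 0 := by
  set Z := Icc a b ∩ f ⁻¹' Ici 0
  have hZ_bdd : BddBelow Z := ⟨a, fun s hs => hs.1.1⟩
  have hc : sInf Z ∈ Z :=
    (hf.preimage_isClosed_of_isClosed isClosed_Icc isClosed_Ici).csInf_mem ⟨b, ⟨hab, le_rfl⟩, hb.le⟩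
      hZ_bdd
  set c := sInf Z
  have hbefore : ∀ s ∈ Ico a c, f s < 0 := fun s hs =>
    not_le.1 fun h => hs.2.not_ge (csInf_le hZ_bdd ⟨⟨hs.1, hs.2.le.trans hc.1.2⟩, h⟩)
  obtain ⟨d, hd, hfd⟩ := intermediate_value_Icc hc.1.1 (hf.mono (Icc_subset_Icc_right hc.1.2))
    ⟨ha.le, hc.2⟩
  have hdc : d = c := hd.2.antisymm (not_lt.1 fun h => (hbefore d ⟨hd.1, h⟩).ne hfd)
  have hfc : f c = 0 := hdc ▸ hfd
  exact ⟨c, ⟨hc.1.1.lt_of_ne fun h => ha.ne (h ▸ hfc), hc.1.2.lt_of_ne fun h => hb.ne' (h ▸ hfc)⟩,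
    hfc, hbefore⟩

lemma HasDerivAt.nonneg_of_forall_Ioo_le {f : ℝ → ℝ} {f' a c : ℝ} (hf : HasDerivAt f f' c)
    (hac : a < c) (hle : ∀ s ∈ Ioo a c, f s ≤ f c) : 0 ≤ f' := by
  refine ge_of_tendsto (hasDerivAt_iff_tendsto_slope_left_right.1 hf).1 ?_
  filter_upwards [Ioo_mem_nhdsLT hac] with s hs
  rw [slope_def_field]
  exact div_nonneg_of_nonpos (sub_nonpos.2 (hle s hs)) (sub_nonpos.2 hs.2.le)

theorem le_of_deriv_lt_deriv_of_history_le {x y : ℝ → ℝ} {t₀ r : ℝ}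
    (hx : ∀ t, t₀ ≤ t → DifferentiableAt ℝ x t) (hy : ∀ t, t₀ ≤ t → DifferentiableAt ℝ y t)
    (hinit : ∀ s ∈ Icc (t₀ - r) t₀, x s ≤ y s) (ht₀ : x t₀ < y t₀)
    (hbound : ∀ t, t₀ < t → x t = y t → (∀ s ∈ Icc (t - r) t, x s ≤ y s) →
      deriv x t < deriv y t) :
    ∀ t, t₀ ≤ t → x t ≤ y t := by
  intro T hT
  by_contra! hT_lt
  have hcont : ContinuousOn (fun t => x t - y t) (Icc t₀ T) := fun t ht =>
    ((hx t ht.1).continuousAt.sub (hy t ht.1).continuousAt).continuousWithinAt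
  obtain ⟨t₁, ⟨ht₀₁, -⟩, hzero, hbefore⟩ :=
    exists_mem_Ioo_eq_zero_forall_Ico_neg hT hcont (sub_neg.2 ht₀) (sub_pos.2 hT_lt)
  have hhist : ∀ s ∈ Icc (t₁ - r) t₁, x s ≤ y s := by
    intro s hs
    rcases le_or_gt s t₀ with hs₀ | hs₀
    · exact hinit s ⟨by linarith [hs.1], hs₀⟩
    · rcases hs.2.lt_or_eq with hs₁ | rfl
      · exact (sub_neg.1 (hbefore s ⟨hs₀.le, hs₁⟩)).le
      · exact (sub_eq_zero.1 hzero).le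
  have hderiv : 0 ≤ deriv x t₁ - deriv y t₁ :=
    ((hx t₁ ht₀₁.le).hasDerivAt.sub (hy t₁ ht₀₁.le).hasDerivAt).nonneg_of_forall_Ioo_le ht₀₁
      fun s hs => by
        change x s - y s ≤ x t₁ - y t₁
        exact hzero ▸ (hbefore s ⟨hs.1.le, hs.2⟩).le
  linarith [hbound t₁ ht₀₁ (sub_eq_zero.1 hzero) hhist]

lemma exists_pos_mul_exp_lt_sub {a b : ℝ → ℝ} {B L r : ℝ} (hbB : ∀ t, b t ≤ B)
    (hab : ∀ t, L ≤ a t - b t) (hL : 0 < L) (hr : 0 ≤ r) :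
    ∃ lam > 0, ∀ t, b t * exp (lam * r) < a t - lam := by
  have hcont : ContinuousAt (fun l : ℝ => l + B * (exp (l * r) - 1)) 0 := by fun_prop
  have hev : ∀ᶠ l in 𝓝 (0 : ℝ), l + B * (exp (l * r) - 1) < L :=
    hcont.eventually_lt continuousAt_const (by simpa using hL)
  obtain ⟨lam, hlam, hlam0⟩ :=
    ((hev.filter_mono nhdsWithin_le_nhds).and (self_mem_nhdsWithin (s := Ioi 0))).exists
  refine ⟨lam, hlam0, fun t => ?_⟩
  have hexp : 0 ≤ exp (lam * r) - 1 := sub_nonneg.2 (one_le_exp (mul_nonneg hlam0.le hr))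
  -- `b t e^{λ r} = b t + b t (e^{λ r} - 1) ≤ b t + B (e^{λ r} - 1) < b t + L - λ ≤ a t - λ`
  nlinarith [mul_le_mul_of_nonneg_right (hbB t) hexp, hab t]

lemma mul_exp_neg_mul_sub_le {C lam r t₀ s t : ℝ} (hC : 0 ≤ C) (hlam : 0 ≤ lam)
    (hst : t - r ≤ s) :
    C * exp (-lam * (s - t₀)) ≤ C * exp (-lam * (t - t₀)) * exp (lam * r) := by
  rw [mul_assoc, ← exp_add]
  gcongr
  nlinarith

theorem le_mul_exp_of_delay_ineq {x a b τ : ℝ → ℝ} {t₀ r lam C : ℝ}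
    (hx_diff : ∀ t, t₀ ≤ t → DifferentiableAt ℝ x t)
    (hτ : ∀ t, τ t ≤ r) (hb : ∀ t, 0 ≤ b t) (hlam0 : 0 ≤ lam)
    (hlam : ∀ t, b t * exp (lam * r) < a t - lam) (hC : 0 < C)
    (hinit : ∀ s ∈ Icc (t₀ - r) t₀, x s ≤ C) (ht₀ : x t₀ < C)
    (hineq : ∀ t, t₀ ≤ t → deriv x t ≤ -a t * x t + b t * sSup (x '' Icc (t - τ t) t)) :
    ∀ t, t₀ ≤ t → x t ≤ C * exp (-lam * (t - t₀)) := by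
  set y := fun t => C * exp (-lam * (t - t₀))
  have hy : ∀ t, HasDerivAt y (-lam * y t) t := fun t => by
    refine ((((hasDerivAt_id t).sub_const t₀).const_mul (-lam)).exp.const_mul C).congr_deriv ?_
    simp only [y, id]
    ring
  refine le_of_deriv_lt_deriv_of_history_le hx_diff (fun t _ => (hy t).differentiableAt)
    (fun s hs => (hinit s hs).trans ?_) (by simpa [y] using ht₀) ?_
  · exact le_mul_of_one_le_right hC.le (one_le_exp (by nlinarith [hs.2]))
  intro t ht hxt hhist
  have hsup : sSup (x '' Icc (t - τ t) t) ≤ y t * exp (lam * r) := by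
    refine Real.sSup_le ?_ (by positivity)
    rintro _ ⟨s, hs, rfl⟩
    exact (hhist s ⟨by linarith [hτ t, hs.1], hs.2⟩).trans
      (mul_exp_neg_mul_sub_le hC.le hlam0 (by linarith [hτ t, hs.1]))
  calc deriv x t ≤ -a t * x t + b t * sSup (x '' Icc (t - τ t) t) := hineq t ht.le
    _ ≤ -a t * y t + b t * exp (lam * r) * y t := by
      rw [hxt, mul_assoc, mul_comm (exp _)]
      gcongr
      exact hb t
    _ < -a t * y t + (a t - lam) * y t := by gcongr; exact hlam t
    _ = deriv y t := by rw [(hy t).deriv]; ring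

theorem mohamad_gopalsamy_halanay_general (x a b τ : ℝ → ℝ) (t₀ τstar L : ℝ)
    (hx_nonneg : ∀ t, 0 ≤ x t)
    (hx_diff : ∀ t, t₀ ≤ t → DifferentiableAt ℝ x t)
    (hx_cont : ContinuousOn x (Set.Icc (t₀ - τstar) t₀))
    (hτ_nonneg : ∀ t, 0 ≤ τ t)
    (hτ_bdd : BddAbove (Set.range τ)) (hτstar : τstar = ⨆ t, τ t)
    (ha_nonneg : ∀ t, 0 ≤ a t)
    (hb_nonneg : ∀ t, 0 ≤ b t)
    (hb_bdd : BddAbove (Set.range b))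
    (hL : L = ⨅ t, (a t - b t)) (hLpos : 0 < L)
    (hineq : ∀ t, t₀ ≤ t →
      deriv x t ≤ -a t * x t + b t * sSup (x '' Set.Icc (t - τ t) t)) :
    ∃ lam > (0:ℝ), ∀ t, t₀ < t →
      x t ≤ sSup (x '' Set.Icc (t₀ - τstar) t₀) * Real.exp (-lam * (t - t₀)) := by
  have hτ : ∀ t, τ t ≤ τstar := fun t => hτstar ▸ le_ciSup hτ_bdd t
  have hτstar0 : 0 ≤ τstar := (hτ_nonneg 0).trans (hτ 0)
  have hab : ∀ t, L ≤ a t - b t := fun t => hL ▸ ciInf_le ⟨-⨆ s, b s, by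
    rintro _ ⟨s, rfl⟩
    linarith [ha_nonneg s, le_ciSup hb_bdd s]⟩ t
  obtain ⟨lam, hlam0, hlam⟩ := exists_pos_mul_exp_lt_sub (le_ciSup hb_bdd) hab hLpos hτstar0
  set K := sSup (x '' Icc (t₀ - τstar) t₀)
  have hxK : ∀ s ∈ Icc (t₀ - τstar) t₀, x s ≤ K := fun s hs =>
    le_csSup (isCompact_Icc.image_of_continuousOn hx_cont).bddAbove (mem_image_of_mem x hs)
  have hxt₀ : x t₀ ≤ K := hxK t₀ ⟨by linarith, le_rfl⟩
  refine ⟨lam, hlam0, fun t ht => le_of_forall_pos_le_add fun ε hε => ?_⟩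
  set E := exp (-lam * (t - t₀))
  have hδ : 0 < ε / E := div_pos hε (exp_pos _)
  calc x t ≤ (K + ε / E) * E :=
        le_mul_exp_of_delay_ineq hx_diff hτ hb_nonneg hlam0.le hlam (by linarith [hx_nonneg t₀])
          (fun s hs => by linarith [hxK s hs]) (by linarith) hineq t ht.le
    _ = K * E + ε := by rw [add_mul, div_mul_cancel₀ _ (exp_pos _).ne']

/-- Mohamad–Gopalsamy generalization of the Halanay inequality with
variable coefficients and variable bounded delay. -/
theorem mohamad_gopalsamy_halanay (x a b τ : ℝ → ℝ) (t₀ τstar L : ℝ)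
    (hx_nonneg : ∀ t, 0 ≤ x t)
    (hx_diff : ∀ t, t₀ ≤ t → DifferentiableAt ℝ x t)
    (hx_cont : ContinuousOn x (Set.Icc (t₀ - τstar) t₀))
    (hτ_nonneg : ∀ t, 0 ≤ τ t) (hτ_cont : Continuous τ)
    (hτ_bdd : BddAbove (Set.range τ)) (hτstar : τstar = ⨆ t, τ t)
    (ha_nonneg : ∀ t, 0 ≤ a t) (ha_cont : Continuous a)
    (ha_bdd : BddAbove (Set.range a))
    (hb_nonneg : ∀ t, 0 ≤ b t) (hb_cont : Continuous b)
    (hb_bdd : BddAbove (Set.range b))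
    (hL : L = ⨅ t, (a t - b t)) (hLpos : 0 < L)
    (hineq : ∀ t, t₀ ≤ t →
      deriv x t ≤ -a t * x t + b t * sSup (x '' Set.Icc (t - τ t) t)) :
    ∃ lam > (0:ℝ), ∀ t, t₀ < t →
      x t ≤ sSup (x '' Set.Icc (t₀ - τstar) t₀) * Real.exp (-lam * (t - t₀)) :=
  mohamad_gopalsamy_halanay_general x a b τ t₀ τstar L hx_nonneg hx_diff hx_cont hτ_nonneg hτ_bdd
    hτstar ha_nonneg hb_nonneg hb_bdd hL hLpos hineq
end

section
/- (Discrete comparison principle) Let h₁ < h₂ < ... < h_r be positive integers with h₀ = 0, let f(t, u, v) be continuous in (u,v) for each t, monotone increasing in v and non-decreasing in u, and let g(u₁,...,u_r) be monotone increasing in each argument. Suppose φ, ψ : ℤ → ℝ satisfy φ(t+1) - φ(t) < f(t, φ(t), g(φ(t-h₁), ..., φ(t-h_r))) and ψ(t+1) - ψ(t) ≥ f(t, ψ(t), g(ψ(t-h₁), ..., ψ(t-h_r))) for all t ∈ [t₀, α) ∩ ℤ, and φ(s) < ψ(s) for all s ∈ [t₀ - h_r, t₀] ∩ ℤ. Then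 φ(t) < ψ(t) for all t ∈ (t₀, α) ∩ ℤ. -/
/-! Induct on `t`: every delayed argument `t - hᵢ` lies in the already compared history
`[t₀ - h_r, t]`, so monotonicity of `g` and of `f` bounds the right-hand side of the strict
inequality for `φ` by that of the inequality for `ψ`, and `φ t < ψ t` carries over to `t + 1`. -/

theorem Int.forall_le_of_history_step {P : ℤ → Prop} {a b c : ℤ}
    (hinit : ∀ s, a ≤ s → s ≤ b → P s)
    (hstep : ∀ t, b ≤ t → t < c → (∀ s, a ≤ s → s ≤ t → P s) → P (t + 1)) :
    ∀ s, a ≤ s → s ≤ c → P s := by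
  have history : ∀ t, b ≤ t → t ≤ c → ∀ s, a ≤ s → s ≤ t → P s := by
    intro t hbt
    induction t, hbt using Int.leInduction with
    | base => exact fun _ => hinit
    | succ t hbt ih =>
      intro htc s has hst
      rcases Int.le_add_one_iff.mp hst with hst | rfl
      · exact ih (by omega) s has hst
      · exact hstep t hbt (by omega) (ih (by omega))
  intro s has hsc
  by_cases hsb : s ≤ b
  · exact hinit s has hsb
  · exact history s (by omega) hsc s has le_rfl

theorem lt_of_subsolution_step_of_supersolution_step {ι : Type*}
    {f : ℝ → ℝ → ℝ} {g : (ι → ℝ) → ℝ}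
    (hf_u : ∀ v, Monotone fun u => f u v) (hf_v : ∀ u, Monotone (f u)) (hg : Monotone g)
    {x y x' y' : ℝ} {xs ys : ι → ℝ} (hxy : x < y) (hxys : xs ≤ ys)
    (hx : x' - x < f x (g xs)) (hy : f y (g ys) ≤ y' - y) : x' < y' := by
  have hf : f x (g xs) ≤ f y (g ys) := (hf_u _ hxy.le).trans (hf_v y (hg hxys))
  linarith

/-- Discrete comparison principle (Proposition 3.1 on `T = ℤ`). -/
theorem discrete_comparison_principle (r : ℕ) (hr : 0 < r)
    (d : Fin r → ℤ) (hd_mono : StrictMono d) (hd_pos : ∀ i, 0 < d i)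
    (f : ℤ → ℝ → ℝ → ℝ) (g : (Fin r → ℝ) → ℝ)
    (hf_incr_v : ∀ t u, StrictMono (f t u))
    (hf_nondecr_u : ∀ t v, Monotone (fun u => f t u v))
    (hg_mono : ∀ u v : Fin r → ℝ, (∀ i, u i ≤ v i) → g u ≤ g v)
    (t₀ α : ℤ) (φ ψ : ℤ → ℝ)
    (hφ : ∀ t ∈ Finset.Ico t₀ α,
      φ (t + 1) - φ t < f t (φ t) (g fun i => φ (t - d i)))
    (hψ : ∀ t ∈ Finset.Ico t₀ α,
      f t (ψ t) (g fun i => ψ (t - d i)) ≤ ψ (t + 1) - ψ t)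
    (hinit : ∀ s ∈ Finset.Icc (t₀ - d ⟨r - 1, by omega⟩) t₀, φ s < ψ s) :
    ∀ t ∈ Finset.Ioo t₀ α, φ t < ψ t := by
  set D := d ⟨r - 1, by omega⟩
  have hd_le : ∀ i, d i ≤ D := fun i =>
    hd_mono.monotone (Fin.le_def.mpr (Nat.le_sub_one_of_lt i.isLt))
  have hD_pos : 0 < D := hd_pos _
  have comparison := Int.forall_le_of_history_step (P := fun s => φ s < ψ s)
    (a := t₀ - D) (b := t₀) (c := α)
    (fun s h₁ h₂ => hinit s (Finset.mem_Icc.mpr ⟨h₁, h₂⟩))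
    (fun t ht₀ htα history => by
      have ht : t ∈ Finset.Ico t₀ α := Finset.mem_Ico.mpr ⟨ht₀, htα⟩
      refine lt_of_subsolution_step_of_supersolution_step (hf_nondecr_u t)
        (fun u => (hf_incr_v t u).monotone) (fun u v h => hg_mono u v h)
        (history t (by omega) le_rfl) (fun i => ?_) (hφ t ht) (hψ t ht)
      exact (history (t - d i) (by linarith [hd_le i]) (by linarith [hd_pos i])).le)
  intro t ht
  obtain ⟨ht₀, htα⟩ := Finset.mem_Ioo.mp ht
  exact comparison t (by omega) htα.le
end

section
/- Let p, q be real constants with 0 < q < p ≤ 1, and let τ be a positive integer. Suppose x : [-τ, ∞) ∩ ℤ → ℝ satisfies x(t+1) - x(t) ≤ -p·x(t) + q · max_{s ∈ [t-τ, t] ∩ ℤ} x(s) for all t ∈ ℕ. Then there exist M₀ > 0 and λ ∈ (-1, 0) such that x(t) ≤ M₀ (1 + λ)^t for all t ∈ ℕ. -/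
/-!
Pick a rate `a ∈ (0, 1)` with `(1 - p) a^τ + q ≤ a^(τ+1)`; it exists because at `a = 1` the
slack is `p - q > 0`. Then `M a^t` is a decreasing supersolution of the delay recursion: since it
decreases, its maximum over the window `[t - τ, t]` is its value at `t - τ`. Once `M` dominates `x`
on the initial window `[-τ, 0]`, induction on `t` keeps `x ≤ M a^t`.
-/

open Set Topology

theorem exists_halanay_rate {p q : ℝ} (hqp : q < p) (τ : ℕ) :
    ∃ a ∈ Ioo (0 : ℝ) 1, (1 - p) * a ^ τ + q ≤ a ^ (τ + 1) := by
  have hcont : ContinuousAt (fun a : ℝ => a ^ (τ + 1) - (1 - p) * a ^ τ - q) 1 := by fun_prop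
  have hpos : ∀ᶠ a in 𝓝[<] (1 : ℝ), 0 < a ^ (τ + 1) - (1 - p) * a ^ τ - q :=
    nhdsWithin_le_nhds <| hcont.eventually <| lt_mem_nhds <| by simpa using hqp
  obtain ⟨a, hfa, ha⟩ := (hpos.and (Ioo_mem_nhdsLT zero_lt_one)).exists
  exact ⟨a, ha, by linarith⟩

theorem halanay_supersolution_geometric {p q a M : ℝ} {τ : ℕ} (ha : 0 < a) (hM : 0 ≤ M)
    (hrate : (1 - p) * a ^ τ + q ≤ a ^ (τ + 1)) (n : ℤ) :
    (1 - p) * (M * a ^ n) + q * (M * a ^ (n - τ)) ≤ M * a ^ (n + 1) := by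
  have hsplit (k : ℕ) : a ^ (n - τ + k) = a ^ (n - τ) * a ^ k := by
    rw [zpow_add₀ ha.ne', zpow_natCast]
  have hn : a ^ n = a ^ (n - τ) * a ^ τ := by rw [← hsplit]; ring_nf
  have hn1 : a ^ (n + 1) = a ^ (n - τ) * a ^ (τ + 1) := by rw [← hsplit]; push_cast; ring_nf
  rw [hn, hn1]
  have hscale : 0 ≤ M * a ^ (n - τ) := mul_nonneg hM (zpow_pos ha _).le
  nlinarith [mul_le_mul_of_nonneg_left hrate hscale]

theorem le_of_halanay_supersolution {p q : ℝ} (hp : p ≤ 1) (hq : 0 ≤ q) {τ : ℕ} {x u : ℤ → ℝ}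
    (hu : Antitone u) (hsuper : ∀ n : ℕ, (1 - p) * u n + q * u (n - τ) ≤ u (n + 1))
    (hinit : ∀ s ∈ Icc (-(τ : ℤ)) 0, x s ≤ u s)
    (hx : ∀ t : ℕ, x (t + 1) - x t ≤ -p * x t + q * sSup (x '' Icc ((t : ℤ) - τ) t))
    (t : ℕ) : x t ≤ u t := by
  suffices h : ∀ t : ℕ, ∀ s ∈ Icc (-(τ : ℤ)) t, x s ≤ u s from h t t ⟨by omega, le_rfl⟩
  intro t
  induction t with
  | zero => exact hinit
  | succ n ih =>
    rintro s ⟨hs₁, hs₂⟩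
    rcases (show s ≤ n ∨ s = n + 1 by omega) with hs | rfl
    · exact ih s ⟨hs₁, hs⟩
    have hsup : sSup (x '' Icc ((n : ℤ) - τ) n) ≤ u (n - τ) := by
      refine csSup_le ((nonempty_Icc.2 (by omega)).image x) ?_
      rintro _ ⟨s, ⟨hs₁, hs₂⟩, rfl⟩
      exact (ih s ⟨by omega, hs₂⟩).trans (hu hs₁)
    have hxn : x n ≤ u n := ih n ⟨by omega, le_rfl⟩
    have h1p : 0 ≤ 1 - p := sub_nonneg.2 hp
    calc x (n + 1) ≤ (1 - p) * x n + q * sSup (x '' Icc ((n : ℤ) - τ) n) := by linarith [hx n]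
      _ ≤ (1 - p) * u n + q * u (n - τ) := by gcongr
      _ ≤ u (n + 1) := hsuper n

theorem discrete_sup_halanay_general (p q : ℝ) (hq : 0 < q) (hqp : q < p) (hp : p ≤ 1)
    (τ : ℕ) (x : ℤ → ℝ)
    (hx : ∀ t : ℕ, x (t + 1) - x t ≤
      -p * x t + q * sSup (x '' Set.Icc ((t : ℤ) - (τ : ℤ)) (t : ℤ))) :
    ∃ M₀ > (0 : ℝ), ∃ lam ∈ Set.Ioo (-1 : ℝ) 0,
      ∀ t : ℕ, x t ≤ M₀ * (1 + lam) ^ t := by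
  obtain ⟨a, ⟨ha₀, ha₁⟩, hrate⟩ := exists_halanay_rate hqp τ
  set M := max (sSup (x '' Icc (-(τ : ℤ)) 0)) 1
  have hM : 0 < M := lt_max_of_lt_right one_pos
  have hinit : ∀ s ∈ Icc (-(τ : ℤ)) 0, x s ≤ M * a ^ s := fun s hs =>
    calc x s ≤ sSup (x '' Icc (-(τ : ℤ)) 0) :=
          le_csSup ((finite_Icc _ _).image x).bddAbove (mem_image_of_mem x hs)
      _ ≤ M := le_max_left _ _
      _ ≤ M * a ^ s := le_mul_of_one_le_right hM.le (one_le_zpow_of_nonpos₀ ha₀ ha₁.le hs.2)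
  refine ⟨M, hM, a - 1, ⟨by linarith, by linarith⟩, fun t => ?_⟩
  have hu : Antitone fun s : ℤ => M * a ^ s := (zpow_right_anti₀ ha₀ ha₁.le).const_mul hM.le
  simpa using le_of_halanay_supersolution hp hq.le hu
    (fun n => halanay_supersolution_geometric ha₀ hM.le hrate n) hinit hx t

/-- Discrete sup-type Halanay inequality (Theorem 3.2 on `T = ℤ`,
constant coefficients, `ℓ = 1`). -/
theorem discrete_sup_halanay (p q : ℝ) (hq : 0 < q) (hqp : q < p) (hp : p ≤ 1)
    (τ : ℕ) (hτ : 1 ≤ τ) (x : ℤ → ℝ)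
    (hx : ∀ t : ℕ, x (t + 1) - x t ≤
      -p * x t + q * sSup (x '' Set.Icc ((t : ℤ) - (τ : ℤ)) (t : ℤ))) :
    ∃ M₀ > (0 : ℝ), ∃ lam ∈ Set.Ioo (-1 : ℝ) 0,
      ∀ t : ℕ, x t ≤ M₀ * (1 + lam) ^ t :=
  discrete_sup_halanay_general p q hq hqp hp τ x hx
end

section
/- (Discrete global stability via Halanay) Let 0 = h₀ < h₁ < ... < h_r be integers, p and q₀,...,q_r constants with 0 < p < 1, q_i ≥ 0, q_r > 0 and Σ_{i=0}^r q_i < p. Suppose F : ℕ × ℝ^{r+1} → ℝ satisfies |F(t, x₀, x₁, ..., x_r)| ≤ Σ_{i=0}^r q_i |x_i| for all arguments. Then every solution x of x(t+1) - x(t) = -p·x(t) + F(t, x(t), x(t-h₁), ..., x(t-h_r)) satisfies |x(t)| → 0 as t → ∞; more precisely there exist M₀ > 1 and λ ∈ (-1, 0) such that |x(t)| ≤ M₀ (1+λ)^t for all t ∈ ℕ. -/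
/-! The solution is compared with the geometric sequence `M μ^t`, where `μ ∈ (0, 1)` is chosen
with `μ^(h_r + 1) = 1 - p + ∑ q_i`. Since every delayed term `μ^(t - h_i)` is at most
`μ^(t - h_r)`, this sequence is a supersolution of the majorising delay recurrence
`u(t+1) = (1-p) u(t) + ∑ q_i u(t - h_i)` satisfied with `≤` by `|x|`, and an induction along
the delay recurrence keeps `|x|` below it once `M` dominates the finitely many initial values. -/

open Finset

section DelayRecurrence

variable {ι : Type*} [Fintype ι] {H : ℕ} {d : ι → ℤ} {c : ℝ} {q : ι → ℝ}

theorem le_of_delay_recurrence (hd : ∀ i, 0 ≤ d i ∧ d i ≤ H) (hc : 0 ≤ c) (hq : ∀ i, 0 ≤ q i)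
    {u w : ℤ → ℝ} (hu : ∀ n : ℕ, u ((n : ℤ) + 1) ≤ c * u n + ∑ i, q i * u ((n : ℤ) - d i))
    (hw : ∀ n : ℕ, c * w n + ∑ i, q i * w ((n : ℤ) - d i) ≤ w ((n : ℤ) + 1))
    (hinit : ∀ s : ℤ, -(H : ℤ) ≤ s → s ≤ 0 → u s ≤ w s) :
    ∀ s : ℤ, -(H : ℤ) ≤ s → u s ≤ w s := by
  suffices h : ∀ n : ℕ, ∀ s : ℤ, -(H : ℤ) ≤ s → s ≤ n → u s ≤ w s from
    fun s hs => h s.toNat s hs (Int.self_le_toNat s)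
  intro n
  induction n with
  | zero => exact fun s hs₁ hs₂ => hinit s hs₁ (mod_cast hs₂)
  | succ n ih =>
    intro s hs₁ hs₂
    obtain hsn | rfl : s ≤ n ∨ s = (n : ℤ) + 1 := by push_cast at hs₂; omega
    · exact ih s hs₁ hsn
    have hdelayed : ∑ i, q i * u ((n : ℤ) - d i) ≤ ∑ i, q i * w ((n : ℤ) - d i) :=
      sum_le_sum fun i _ => mul_le_mul_of_nonneg_left
        (ih _ (by linarith [(hd i).2]) (by linarith [(hd i).1])) (hq i)
    have hcurrent : c * u n ≤ c * w n :=
      mul_le_mul_of_nonneg_left (ih n (by omega) le_rfl) hc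
    linarith [hu n, hw n]

theorem geometric_supersolution (hd : ∀ i, 0 ≤ d i ∧ d i ≤ H) (hc : 0 ≤ c) (hq : ∀ i, 0 ≤ q i)
    {μ M : ℝ} (hμ₀ : 0 < μ) (hμ₁ : μ ≤ 1) (hM : 0 ≤ M) (hμH : c + ∑ i, q i ≤ μ ^ (H + 1))
    (n : ℤ) : c * (M * μ ^ n) + ∑ i, q i * (M * μ ^ (n - d i)) ≤ M * μ ^ (n + 1) := by
  have hdelay : ∀ k : ℤ, 0 ≤ k → k ≤ H → μ ^ (n - k) ≤ μ ^ (n - H) := fun k _ hk =>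
    zpow_le_zpow_right_of_le_one₀ hμ₀ hμ₁ (by omega)
  have hcurrent : c * μ ^ n ≤ c * μ ^ (n - H) :=
    mul_le_mul_of_nonneg_left (zpow_le_zpow_right_of_le_one₀ hμ₀ hμ₁ (by omega)) hc
  have hdelayed : ∑ i, q i * μ ^ (n - d i) ≤ (∑ i, q i) * μ ^ (n - H) := by
    rw [sum_mul]
    exact sum_le_sum fun i _ => mul_le_mul_of_nonneg_left (hdelay _ (hd i).1 (hd i).2) (hq i)
  have hshift : μ ^ (H + 1) * μ ^ (n - H) = μ ^ (n + 1) := by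
    rw [← zpow_natCast, ← zpow_add₀ hμ₀.ne']
    congr 1
    push_cast
    ring
  have hsum : c * μ ^ n + ∑ i, q i * μ ^ (n - d i) ≤ μ ^ (n + 1) := by
    nlinarith [zpow_pos hμ₀ (n - H)]
  calc c * (M * μ ^ n) + ∑ i, q i * (M * μ ^ (n - d i))
      = M * (c * μ ^ n + ∑ i, q i * μ ^ (n - d i)) := by
        rw [mul_add, mul_sum]
        congr 1
        · ring
        · exact sum_congr rfl fun i _ => by ring
    _ ≤ M * μ ^ (n + 1) := mul_le_mul_of_nonneg_left hsum hM

end DelayRecurrence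

theorem exists_mem_Ioo_pow_eq {a : ℝ} (ha₀ : 0 < a) (ha₁ : a < 1) {k : ℕ} (hk : k ≠ 0) :
    ∃ μ ∈ Set.Ioo (0 : ℝ) 1, μ ^ k = a :=
  ⟨a ^ (k : ℝ)⁻¹, ⟨Real.rpow_pos_of_pos ha₀ _, Real.rpow_lt_one ha₀.le ha₁ (by positivity)⟩,
    Real.rpow_inv_natCast_pow ha₀.le hk⟩

theorem Finset.exists_one_lt_forall_le_mul {α : Type*} (S : Finset α) (u w : α → ℝ)
    (hw : ∀ s ∈ S, 0 < w s) : ∃ M > (1 : ℝ), ∀ s ∈ S, u s ≤ M * w s := by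
  have hratio : ∀ s ∈ S, 0 ≤ |u s| / w s := fun s hs => div_nonneg (abs_nonneg _) (hw s hs).le
  refine ⟨2 + ∑ s ∈ S, |u s| / w s, by linarith [sum_nonneg hratio], fun s hs => ?_⟩
  calc u s ≤ |u s| / w s * w s := by rw [div_mul_cancel₀ _ (hw s hs).ne']; exact le_abs_self _
    _ ≤ (2 + ∑ s ∈ S, |u s| / w s) * w s := by
        gcongr
        · exact (hw s hs).le
        · linarith [single_le_sum hratio hs, sum_nonneg hratio]

open Filter in
theorem discrete_global_stability_general (r : ℕ)
    (d : Fin (r + 1) → ℤ) (hd0 : d 0 = 0) (hd_mono : StrictMono d)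
    (p : ℝ) (hp : 0 < p ∧ p < 1)
    (q : Fin (r + 1) → ℝ) (hq_nonneg : ∀ i, 0 ≤ q i)
    (hsum : ∑ i, q i < p)
    (F : ℕ → (Fin (r + 1) → ℝ) → ℝ)
    (hF : ∀ (t : ℕ) (v : Fin (r + 1) → ℝ), |F t v| ≤ ∑ i, q i * |v i|)
    (x : ℤ → ℝ)
    (hx : ∀ t : ℕ, x ((t : ℤ) + 1) - x t =
      -p * x t + F t (fun i => x ((t : ℤ) - d i))) :
    Tendsto (fun t : ℕ => |x t|) atTop (nhds 0) ∧
    ∃ M₀ > (1 : ℝ), ∃ lam ∈ Set.Ioo (-1 : ℝ) 0,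
      ∀ t : ℕ, |x t| ≤ M₀ * (1 + lam) ^ t := by
  obtain ⟨hp₀, hp₁⟩ := hp
  set H := (d (Fin.last r)).toNat
  have hd : ∀ i, 0 ≤ d i ∧ d i ≤ H := fun i =>
    ⟨hd0 ▸ hd_mono.monotone (Fin.zero_le i),
      (hd_mono.monotone (Fin.le_last i)).trans (Int.self_le_toNat _)⟩
  have hq_sum : 0 ≤ ∑ i, q i := sum_nonneg fun i _ => hq_nonneg i
  obtain ⟨μ, ⟨hμ₀, hμ₁⟩, hμH⟩ :=
    exists_mem_Ioo_pow_eq (a := 1 - p + ∑ i, q i) (by linarith) (by linarith) H.succ_ne_zero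
  obtain ⟨M, hM, hinit⟩ := (Icc (-(H : ℤ)) 0).exists_one_lt_forall_le_mul (|x ·|) (μ ^ ·)
    fun s _ => zpow_pos hμ₀ s
  have hsub (n : ℕ) : |x ((n : ℤ) + 1)| ≤ (1 - p) * |x n| + ∑ i, q i * |x ((n : ℤ) - d i)| := by
    calc |x ((n : ℤ) + 1)| = |(1 - p) * x n + F n (fun i => x ((n : ℤ) - d i))| := by
          rw [show x ((n : ℤ) + 1) = _ from eq_add_of_sub_eq' (hx n)]; ring_nf
      _ ≤ (1 - p) * |x n| + ∑ i, q i * |x ((n : ℤ) - d i)| := by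
          grw [abs_add_le, abs_mul, abs_of_pos (sub_pos.2 hp₁), hF]
  have hbound (t : ℕ) : |x t| ≤ M * μ ^ t := by
    simpa using le_of_delay_recurrence hd (sub_pos.2 hp₁).le hq_nonneg hsub
      (geometric_supersolution hd (sub_pos.2 hp₁).le hq_nonneg hμ₀ hμ₁.le (by linarith) hμH.ge ·)
      (fun s hs₁ hs₂ => hinit s (mem_Icc.2 ⟨hs₁, hs₂⟩)) t (by omega)
  refine ⟨squeeze_zero (fun t => abs_nonneg _) hbound ?_, M, hM, μ - 1,
    ⟨by linarith, by linarith⟩, by simpa using hbound⟩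
  simpa using (tendsto_pow_atTop_nhds_zero_of_lt_one hμ₀.le hμ₁).const_mul M

open Filter in
/-- Discrete global stability via the Halanay inequality
(Theorem 4.1 on `T = ℤ` with constant coefficients and `ℓ = 1`). -/
theorem discrete_global_stability (r : ℕ)
    (d : Fin (r + 1) → ℤ) (hd0 : d 0 = 0) (hd_mono : StrictMono d)
    (p : ℝ) (hp : 0 < p ∧ p < 1)
    (q : Fin (r + 1) → ℝ) (hq_nonneg : ∀ i, 0 ≤ q i)
    (hqr : 0 < q (Fin.last r)) (hsum : ∑ i, q i < p)
    (F : ℕ → (Fin (r + 1) → ℝ) → ℝ)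
    (hF : ∀ (t : ℕ) (v : Fin (r + 1) → ℝ), |F t v| ≤ ∑ i, q i * |v i|)
    (x : ℤ → ℝ)
    (hx : ∀ t : ℕ, x ((t : ℤ) + 1) - x t =
      -p * x t + F t (fun i => x ((t : ℤ) - d i))) :
    Tendsto (fun t : ℕ => |x t|) atTop (nhds 0) ∧
    ∃ M₀ > (1 : ℝ), ∃ lam ∈ Set.Ioo (-1 : ℝ) 0,
      ∀ t : ℕ, |x t| ≤ M₀ * (1 + lam) ^ t :=
  discrete_global_stability_general r d hd0 hd_mono p hp q hq_nonneg hsum F hF x hx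
end

section
/- (Weighted-geometric-mean Halanay, discrete constant case) Let 0 = h₀ < h₁ < ... < h_r be integers, α₀, ..., α_r > 0 with Σ_{i=0}^r α_i = 1, and p, β₀, ..., β_r constants with 0 < p ≤ 1, β_i > 0, and Π_{i=0}^r β_i < p. Suppose x : [-h_r, ∞) ∩ ℤ → ℝ is positive and satisfies x(t+1) - x(t) ≤ -p·x(t) + Π_{i=0}^r β_i · x(t-h_i)^{α_i} for all t ∈ ℕ. Then there exist L₀ > 0 and γ ∈ (-1, 0) such that x(t) ≤ L₀ (1+γ)^t for all t ∈ ℕ. -/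
/-!
Let `H` be the largest delay and `B = ∏ β i`. Since `B < p`, the inequality
`(1 - p) l ^ H + B ≤ l ^ (H + 1)`, strict at `l = 1`, still holds for some `l ∈ (0, 1)`.
A weighted geometric mean is at most the largest of its values, so
`x (t + 1) ≤ (1 - p) x t + B max_{k ≤ H} x (t - k)`, and the choice of `l` makes `L l ^ t` a
supersolution of this delayed recursion. Taking `L` the maximum of `x` on `[-H, 0]`, induction
gives `x t ≤ L l ^ t`, that is `γ = l - 1`.
-/

open Finset Filter Topology

theorem prod_mul_rpow_le_prod_mul {ι : Type*} (s : Finset ι) {β y w : ι → ℝ} {M : ℝ}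
    (hβ : ∀ i ∈ s, 0 ≤ β i) (hw : ∀ i ∈ s, 0 ≤ w i) (hw1 : ∑ i ∈ s, w i = 1)
    (hy : ∀ i ∈ s, 0 ≤ y i) (hyM : ∀ i ∈ s, y i ≤ M) :
    ∏ i ∈ s, β i * y i ^ w i ≤ (∏ i ∈ s, β i) * M := by
  have hmean : ∏ i ∈ s, y i ^ w i ≤ M :=
    calc ∏ i ∈ s, y i ^ w i ≤ ∑ i ∈ s, w i * y i :=
          Real.geom_mean_le_arith_mean_weighted s w y hw hw1 hy
      _ ≤ ∑ i ∈ s, w i * M :=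
          sum_le_sum fun i hi => mul_le_mul_of_nonneg_left (hyM i hi) (hw i hi)
      _ = M := by rw [← sum_mul, hw1, one_mul]
  rw [prod_mul_distrib]
  exact mul_le_mul_of_nonneg_left hmean (prod_nonneg hβ)

theorem exists_decay_rate {p B : ℝ} (hBp : B < p) (H : ℕ) :
    ∃ l ∈ Set.Ioo (0 : ℝ) 1, (1 - p) * l ^ H + B ≤ l ^ (H + 1) := by
  have hcont : Continuous fun l : ℝ => l ^ (H + 1) - ((1 - p) * l ^ H + B) := by fun_prop
  have hone : 0 < (1 : ℝ) ^ (H + 1) - ((1 - p) * 1 ^ H + B) := by simp; linarith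
  have hnear : ∀ᶠ l in 𝓝 (1 : ℝ), 0 < l ^ (H + 1) - ((1 - p) * l ^ H + B) :=
    (hcont.tendsto 1).eventually (lt_mem_nhds hone)
  have hleft : ∀ᶠ l in 𝓝[<] (1 : ℝ), l ∈ Set.Ioo 0 1 := Ioo_mem_nhdsLT zero_lt_one
  obtain ⟨l, hl, hpos⟩ := (hleft.and (nhdsWithin_le_nhds hnear)).exists
  exact ⟨l, hl, by linarith⟩

theorem le_mul_zpow_of_delayed_step {x : ℤ → ℝ} {p B l L : ℝ} {H : ℕ} (hp : p ≤ 1)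
    (hl0 : 0 < l) (hl1 : l ≤ 1) (hL : 0 ≤ L)
    (hrate : (1 - p) * l ^ H + B ≤ l ^ (H + 1))
    (hinit : ∀ s ∈ Icc (-H : ℤ) 0, x s ≤ L * l ^ s)
    (hstep : ∀ (t : ℕ) (M : ℝ), (∀ k ≤ H, x (t - k) ≤ M) → x (t + 1) ≤ (1 - p) * x t + B * M)
    (s : ℤ) (hs : -H ≤ s) : x s ≤ L * l ^ s := by
  suffices hwin : ∀ t : ℕ, ∀ s ∈ Icc (-H : ℤ) t, x s ≤ L * l ^ s from
    hwin s.toNat s (mem_Icc.2 ⟨hs, Int.self_le_toNat s⟩)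
  intro t
  induction t with
  | zero => exact hinit
  | succ t ih =>
    intro s hs
    obtain ⟨hs₁, hs₂⟩ := mem_Icc.1 hs
    rcases (show s ≤ t ∨ s = t + 1 by omega) with hst | rfl
    · exact ih s (mem_Icc.2 ⟨hs₁, hst⟩)
    have hdelay : ∀ k ≤ H, x (t - k) ≤ L * l ^ ((t : ℤ) - H) := fun k hk =>
      (ih _ (mem_Icc.2 ⟨by omega, by omega⟩)).trans <|
        mul_le_mul_of_nonneg_left (zpow_le_zpow_right_of_le_one₀ hl0 hl1 (by omega)) hL
    have hsplit : ∀ n : ℕ, l ^ ((t : ℤ) - H) * l ^ n = l ^ ((t : ℤ) - H + n) := fun n => by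
      rw [zpow_add₀ hl0.ne', zpow_natCast]
    have henv_nonneg : (0 : ℝ) ≤ L * l ^ ((t : ℤ) - H) := by positivity
    calc x (t + 1) ≤ (1 - p) * x t + B * (L * l ^ ((t : ℤ) - H)) := hstep t _ hdelay
      _ ≤ (1 - p) * (L * l ^ (t : ℤ)) + B * (L * l ^ ((t : ℤ) - H)) := by
          gcongr
          exact ih t (mem_Icc.2 ⟨by omega, le_rfl⟩)
      _ = L * l ^ ((t : ℤ) - H) * ((1 - p) * l ^ H + B) := by
          rw [show (t : ℤ) = t - H + H by ring, ← hsplit]; ring_nf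
      _ ≤ L * l ^ ((t : ℤ) - H) * l ^ (H + 1) := mul_le_mul_of_nonneg_left hrate henv_nonneg
      _ = L * l ^ ((t + 1 : ℕ) : ℤ) := by
          rw [mul_assoc, hsplit]; push_cast; ring_nf

open Real in
theorem discrete_geometric_halanay_general (r : ℕ)
    (h : Fin (r + 1) → ℕ)
    (α : Fin (r + 1) → ℝ) (hα : ∀ i, 0 < α i) (hαsum : ∑ i, α i = 1)
    (p : ℝ) (hp : 0 < p ∧ p ≤ 1)
    (β : Fin (r + 1) → ℝ) (hβ : ∀ i, 0 < β i)
    (hprod : ∏ i, β i < p)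
    (x : ℤ → ℝ) (hx_pos : ∀ s : ℤ, 0 < x s)
    (hx : ∀ t : ℕ, x (t + 1) - x t ≤
      -p * x t + ∏ i, β i * (x ((t : ℤ) - (h i : ℤ))) ^ (α i)) :
    ∃ L₀ > (0 : ℝ), ∃ γ ∈ Set.Ioo (-1 : ℝ) 0,
      ∀ t : ℕ, x t ≤ L₀ * (1 + γ) ^ t := by
  set H := univ.sup h
  obtain ⟨l, ⟨hl0, hl1⟩, hrate⟩ := exists_decay_rate hprod H
  set L := (Icc (-H : ℤ) 0).sup' ⟨0, by simp⟩ x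
  have hL : 0 < L := (hx_pos 0).trans_le (le_sup' x (by simp))
  have hinit : ∀ s ∈ Icc (-H : ℤ) 0, x s ≤ L * l ^ s := fun s hs =>
    (le_sup' x hs).trans <| le_mul_of_one_le_right hL.le <|
      one_le_zpow_of_nonpos₀ hl0 hl1.le (mem_Icc.1 hs).2
  have hstep : ∀ (t : ℕ) (M : ℝ), (∀ k ≤ H, x (t - k) ≤ M) →
      x (t + 1) ≤ (1 - p) * x t + (∏ i, β i) * M := fun t M hM => by
    have hmean := prod_mul_rpow_le_prod_mul univ (fun i _ => (hβ i).le) (fun i _ => (hα i).le)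
      hαsum (fun i _ => (hx_pos _).le) (fun i _ => hM (h i) (le_sup (mem_univ i)))
    linarith [hx t]
  have hdecay := le_mul_zpow_of_delayed_step hp.2 hl0 hl1.le hL.le hrate hinit hstep
  refine ⟨L, hL, l - 1, ⟨by linarith, by linarith⟩, fun t => ?_⟩
  simpa using hdecay t (by omega)

open Real in
/-- Weighted-geometric-mean Halanay inequality, discrete constant case
(Theorem 3.3 on `T = ℤ`). -/
theorem discrete_geometric_halanay (r : ℕ)
    (h : Fin (r + 1) → ℕ) (hh0 : h 0 = 0) (hh_mono : StrictMono h)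
    (α : Fin (r + 1) → ℝ) (hα : ∀ i, 0 < α i) (hαsum : ∑ i, α i = 1)
    (p : ℝ) (hp : 0 < p ∧ p ≤ 1)
    (β : Fin (r + 1) → ℝ) (hβ : ∀ i, 0 < β i)
    (hprod : ∏ i, β i < p)
    (x : ℤ → ℝ) (hx_pos : ∀ s : ℤ, 0 < x s)
    (hx : ∀ t : ℕ, x (t + 1) - x t ≤
      -p * x t + ∏ i, β i * (x ((t : ℤ) - (h i : ℤ))) ^ (α i)) :
    ∃ L₀ > (0 : ℝ), ∃ γ ∈ Set.Ioo (-1 : ℝ) 0,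
      ∀ t : ℕ, x t ≤ L₀ * (1 + γ) ^ t :=
  discrete_geometric_halanay_general r h α hα hαsum p hp β hβ hprod x hx_pos hx
end

section
/- There is no delay function δ₋(h, ·) : [0, ∞) ∩ T̃ → T̃ on the set T̃ = (-∞, 0] ∪ [1, ∞). More precisely, there do not exist h > 0 and a strictly increasing continuous map δ : [0,∞) ∩ T̃ → T̃ such that δ(t) < t for all t ≥ 0, δ maps [0,∞) ∩ T̃ onto [δ(0), ∞) ∩ T̃, and δ preserves the scattered/dense structure: whenever t is right-scattered in [0,∞) ∩ T̃ (i.e. inf{s ∈ T̃ : s > t} > t restricted to [0,∞) ∩ T̃), δ(t) is right-scattered in [δ(0),∞) ∩ T̃. -/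
open Set

/-! In `T̃ = (-∞, 0] ∪ [1, ∞)` the point `0` is right-scattered (its successor is `1`), whereas the
point `δ 0 < 0` lies inside the interval `(-∞, 0]` and is therefore right-dense; so `δ` cannot
preserve right-scatteredness at `0`. -/

theorem csInf_eq_of_Ioo_subset {α : Type*} [ConditionallyCompleteLinearOrder α] [DenselyOrdered α]
    {S : Set α} {a b : α} (hab : a < b) (hSa : S ⊆ Ioi a) (hS : Ioo a b ⊆ S) : sInf S = a := by
  have hne : (Ioo a b).Nonempty := nonempty_Ioo.mpr hab
  apply le_antisymm
  · calc sInf S ≤ sInf (Ioo a b) := csInf_le_csInf ⟨a, fun _ hs ↦ (hSa hs).le⟩ hne hS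
      _ = a := csInf_Ioo hab
  · exact le_csInf (hne.mono hS) fun _ hs ↦ (hSa hs).le

theorem sInf_Ttilde_gt_of_neg {a : ℝ} (ha : a < 0) :
    sInf {s ∈ (Iic 0 ∪ Ici 1) ∩ Ici a | a < s} = a :=
  csInf_eq_of_Ioo_subset ha (fun _ hs ↦ hs.2)
    fun _ hs ↦ ⟨⟨Or.inl hs.2.le, hs.1.le⟩, hs.1⟩

theorem sInf_Ttilde_gt_zero : sInf {s ∈ (Iic 0 ∪ Ici 1) ∩ Ici 0 | (0 : ℝ) < s} = 1 := by
  have hset : {s ∈ (Iic 0 ∪ Ici 1) ∩ Ici 0 | (0 : ℝ) < s} = Ici 1 := by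
    ext s
    constructor
    · rintro ⟨⟨hs | hs, -⟩, hpos⟩
      · exact absurd hpos hs.not_gt
      · exact hs
    · intro hs
      exact ⟨⟨Or.inr hs, mem_Ici.mpr (zero_le_one.trans hs)⟩, zero_lt_one.trans_le hs⟩
  rw [hset, csInf_Ici]

/-- There is no delay function on `T̃ = (-∞, 0] ∪ [1, ∞)` (Example 2.3). -/
theorem no_delay_function_on_Ttilde
    (T : Set ℝ) (hT : T = Set.Iic 0 ∪ Set.Ici 1) :
    ¬ ∃ (h : ℝ) (δ : ℝ → ℝ), 0 < h ∧
      StrictMonoOn δ (T ∩ Set.Ici 0) ∧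
      ContinuousOn δ (T ∩ Set.Ici 0) ∧
      (∀ t ∈ T ∩ Set.Ici 0, δ t ∈ T) ∧
      (∀ t ∈ T ∩ Set.Ici 0, δ t < t) ∧
      δ '' (T ∩ Set.Ici 0) = T ∩ Set.Ici (δ 0) ∧
      (∀ t ∈ T ∩ Set.Ici 0,
        t < sInf {s ∈ T ∩ Set.Ici 0 | t < s} →
        δ t < sInf {s ∈ T ∩ Set.Ici (δ 0) | δ t < s}) := by
  rintro ⟨-, δ, -, -, -, -, hlt, -, hscat⟩
  subst hT
  have h0 : (0 : ℝ) ∈ (Iic 0 ∪ Ici 1) ∩ Ici 0 := ⟨Or.inl self_mem_Iic, self_mem_Ici⟩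
  have hδ0 : δ 0 < 0 := hlt 0 h0
  have h0_scattered : (0 : ℝ) < sInf {s ∈ (Iic 0 ∪ Ici 1) ∩ Ici 0 | 0 < s} := by
    rw [sInf_Ttilde_gt_zero]
    exact one_pos
  have hδ0_scattered := hscat 0 h0 h0_scattered
  rw [sInf_Ttilde_gt_of_neg hδ0] at hδ0_scattered
  exact lt_irrefl _ hδ0_scattered
end
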